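/- arXiv:1709.07609 — 2 statements merged into one kernel-verified Lean document; each statement's English description precedes it below -/
import Mathlib

section
/- For every real number x > 1 the following two series identities hold: Σ_{r=1}^∞ x^{1−2r}/(2r(2r−1)) = (1/2)·[ x·log(1 − x^{−2}) + log((1 + x^{−1})/(1 − x^{−1})) ], and Σ_{r=2}^∞ x^{2−2r}/((2r−1)(2r−2)) = 1 − (1/2)·[ log(1 − x^{−2}) + x·log((1 + x^{−1})/(1 − x^{−1})) ]. -/
/-!
Put `y = x⁻¹`. The partial fractions `1 / (n (n + 1)) = 1 / n - 1 / (n + 1)` split each series into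
the odd part `Σ y ^ (2k+1) / (2k+1) = ½ log ((1 + y) / (1 - y))` and the even part
`Σ y ^ (2k+2) / (2k+2) = -½ log (1 - y²)` of the series of `-log (1 - y)`, one of them shifted by a
power of `y`, which the factor `x = y⁻¹` compensates.
-/

open Real

namespace Real

variable {y : ℝ}

theorem hasSum_pow_odd_div_odd (hy : |y| < 1) :
    HasSum (fun k : ℕ => y ^ (2 * k + 1) / (2 * k + 1)) (log ((1 + y) / (1 - y)) / 2) := by
  have h1m : 1 - y ≠ 0 := by linarith [le_abs_self y]
  have h1p : 1 + y ≠ 0 := by linarith [neg_abs_le y]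
  rw [log_div h1p h1m]
  refine ((hasSum_log_sub_log_of_abs_lt_one hy).div_const 2).congr_fun fun k => ?_
  field_simp

theorem hasSum_pow_even_div_even (hy : |y| < 1) :
    HasSum (fun k : ℕ => y ^ (2 * k + 2) / (2 * k + 2)) (-log (1 - y ^ 2) / 2) := by
  have hy2 : |y ^ 2| < 1 := by rw [abs_pow]; exact pow_lt_one₀ (abs_nonneg y) hy two_ne_zero
  refine ((hasSum_pow_div_log_of_abs_lt_one hy2).div_const 2).congr_fun fun k => ?_
  rw [← pow_mul]
  field_simp
  ring

theorem hasSum_pow_odd_div_odd_mul_even (hy : |y| < 1) :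
    HasSum (fun k : ℕ => y ^ (2 * k + 1) / ((2 * k + 1) * (2 * k + 2)))
      (log ((1 + y) / (1 - y)) / 2 + y⁻¹ * log (1 - y ^ 2) / 2) := by
  have h := (hasSum_pow_odd_div_odd hy).sub ((hasSum_pow_even_div_even hy).mul_left y⁻¹)
  rw [show log ((1 + y) / (1 - y)) / 2 + y⁻¹ * log (1 - y ^ 2) / 2
      = log ((1 + y) / (1 - y)) / 2 - y⁻¹ * (-log (1 - y ^ 2) / 2) by ring]
  refine h.congr_fun fun k => ?_
  rcases eq_or_ne y 0 with rfl | hy0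
  · simp
  · field_simp
    ring

theorem hasSum_pow_even_div_even_mul_odd (hy : |y| < 1) (hy0 : y ≠ 0) :
    HasSum (fun k : ℕ => y ^ (2 * k + 2) / ((2 * k + 2) * (2 * k + 3)))
      (1 - log (1 - y ^ 2) / 2 - y⁻¹ * log ((1 + y) / (1 - y)) / 2) := by
  have htail := (hasSum_nat_add_iff' 1).mpr (hasSum_pow_odd_div_odd hy)
  have h := (hasSum_pow_even_div_even hy).sub (htail.mul_left y⁻¹)
  rw [show 1 - log (1 - y ^ 2) / 2 - y⁻¹ * log ((1 + y) / (1 - y)) / 2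
      = -log (1 - y ^ 2) / 2 - y⁻¹ * (log ((1 + y) / (1 - y)) / 2 -
        ∑ k ∈ Finset.range 1, y ^ (2 * k + 1) / (2 * k + 1)) by
    simp; field_simp; ring]
  refine h.congr_fun fun k => ?_
  push_cast
  field_simp
  ring

end Real

/-- **Lemma 3.5, closed forms of `f₁` and `f₂`.**  For `x > 1`,
`Σ_{r≥1} x^{1−2r}/(2r(2r−1)) = (1/2)[x·log(1−x⁻²) + log((1+x⁻¹)/(1−x⁻¹))]` and
`Σ_{r≥2} x^{2−2r}/((2r−1)(2r−2)) = 1 − (1/2)[log(1−x⁻²) + x·log((1+x⁻¹)/(1−x⁻¹))]`. -/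
theorem f1_f2_closed_form (x : ℝ) (hx : 1 < x) :
    (∑' r : ℕ, x ^ (1 - 2 * ((r : ℤ) + 1)) /
        ((2 * ((r : ℝ) + 1)) * (2 * ((r : ℝ) + 1) - 1)) =
      (1 / 2) * (x * Real.log (1 - (x ^ 2)⁻¹) +
        Real.log ((1 + x⁻¹) / (1 - x⁻¹)))) ∧
    (∑' r : ℕ, x ^ (2 - 2 * ((r : ℤ) + 2)) /
        ((2 * ((r : ℝ) + 2) - 1) * (2 * ((r : ℝ) + 2) - 2)) =
      1 - (1 / 2) * (Real.log (1 - (x ^ 2)⁻¹) +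
        x * Real.log ((1 + x⁻¹) / (1 - x⁻¹)))) := by
  have hy : |x⁻¹| < 1 := by
    rw [abs_inv, abs_of_pos (by linarith)]; exact inv_lt_one_of_one_lt₀ hx
  have hzpow (m : ℤ) (n : ℕ) (h : m = -n) : x ^ m = x⁻¹ ^ n := by simp [h]
  have hodd := hasSum_pow_odd_div_odd_mul_even hy
  have heven := hasSum_pow_even_div_even_mul_odd hy (inv_ne_zero (by positivity))
  rw [inv_inv, inv_pow x 2] at hodd heven
  constructor
  · refine ((hodd.congr_fun fun r => ?_).tsum_eq).trans (by ring)
    rw [hzpow _ (2 * r + 1) (by push_cast; ring)]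
    ring_nf
  · refine ((heven.congr_fun fun r => ?_).tsum_eq).trans (by ring)
    rw [hzpow _ (2 * r + 2) (by push_cast; ring)]
    ring_nf
end

section
/- Let L be a number field. For every integer ℓ ≥ 1 and every rational prime p one has Σ_{r=1}^{n_L} Λ̃_L(p^{ℓ·n_L + r}) ≥ n_L·log p. -/
/-!
Write `p 𝓞_L = ∏ 𝔓 ^ e_𝔓` with `N 𝔓 = p ^ f_𝔓`, so that `∑ e_𝔓 f_𝔓 = n_L`. Whenever `f_𝔓 ∣ k`,
the prime power `𝔓 ^ (k / f_𝔓)` has norm `p ^ k` and contributes `f_𝔓 log p` to `Λ̃_L(p ^ k)`.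
Any `n_L` consecutive integers contain at least `n_L / f_𝔓 ≥ e_𝔓` multiples of `f_𝔓`, so over
`k = ℓ n_L + 1, …, ℓ n_L + n_L` the prime `𝔓` alone contributes at least `e_𝔓 f_𝔓 log p`, and
these contributions add up to `n_L log p`.
-/

open NumberField Ideal Finset
open scoped Classical

noncomputable section

theorem Nat.card_Ioc_filter_dvd (f : ℕ) {a b : ℕ} (hab : a ≤ b) :
    #{x ∈ Ioc a b | f ∣ x} = b / f - a / f := by
  have hdisj : Disjoint (Ioc 0 a) (Ioc a b) := Ioc_disjoint_Ioc_of_le le_rfl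
  rw [← Nat.Ioc_filter_dvd_card_eq_div b, ← Nat.Ioc_filter_dvd_card_eq_div a,
    ← Ioc_union_Ioc_eq_Ioc (Nat.zero_le a) hab, filter_union,
    card_union_of_disjoint (disjoint_filter_filter hdisj)]
  omega

theorem Nat.div_le_card_Icc_filter_dvd_add (A n f : ℕ) :
    n / f ≤ #{r ∈ Icc 1 n | f ∣ A + r} := by
  have hshift : #{r ∈ Icc 1 n | f ∣ A + r} = #{x ∈ Ioc A (A + n) | f ∣ x} := by
    rw [← Icc_add_one_left_eq_Ioc, ← map_add_left_Icc, filter_map, card_map]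
    rfl
  have : A / f + n / f ≤ (A + n) / f := Nat.div_add_div_le_add_div
  rw [hshift, Nat.card_Ioc_filter_dvd f (Nat.le_add_right A n)]
  omega

theorem Ideal.eq_of_pow_eq_pow {R : Type*} [CommSemiring R] {P Q : Ideal R} [P.IsPrime]
    [Q.IsPrime] {a b : ℕ} (ha : a ≠ 0) (hb : b ≠ 0) (h : P ^ a = Q ^ b) : P = Q :=
  le_antisymm (IsPrime.le_of_pow_le (h.trans_le (pow_le_self hb)))
    (IsPrime.le_of_pow_le (h.symm.trans_le (pow_le_self ha)))

instance Ideal.fintypePrimesOver {R S : Type*} [CommRing R] [CommRing S] [Algebra R S]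
    [Algebra.QuasiFinite R S] (I : Ideal R) : Fintype (I.primesOver S) :=
  (Algebra.QuasiFinite.finite_primesOver I).fintype

section

variable {S : Type*} [CommRing S] [IsDedekindDomain S] [Module.Free ℤ S]

def tildeVonMangoldt (Λ : Ideal S → ℝ) (m : ℕ) : ℝ :=
  ∑' I : Ideal S, if absNorm I = m then Λ I else 0

variable {Λ : Ideal S → ℝ}

theorem vonMangoldt_nonneg
    (hΛ₁ : ∀ (P : Ideal S) (m : ℕ), P.IsPrime → P ≠ ⊥ → 1 ≤ m → Λ (P ^ m) = Real.log (absNorm P))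
    (hΛ₂ : ∀ I : Ideal S,
      (¬ ∃ (P : Ideal S) (m : ℕ), P.IsPrime ∧ P ≠ ⊥ ∧ 1 ≤ m ∧ I = P ^ m) → Λ I = 0)
    (I : Ideal S) : 0 ≤ Λ I := by
  by_cases h : ∃ (P : Ideal S) (m : ℕ), P.IsPrime ∧ P ≠ ⊥ ∧ 1 ≤ m ∧ I = P ^ m
  · obtain ⟨P, m, hP, hP0, hm, rfl⟩ := h
    rw [hΛ₁ P m hP hP0 hm]
    exact Real.log_natCast_nonneg _
  · exact (hΛ₂ I h).ge

variable [Module.Finite ℤ S]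

theorem summable_ite_absNorm_eq [CharZero S] (m : ℕ) :
    Summable fun I : Ideal S => if absNorm I = m then Λ I else 0 := by
  refine summable_of_hasFiniteSupport ((finite_setOfPred_absNorm_eq m).subset fun I hI => ?_)
  by_contra h
  exact hI (if_neg h)

theorem sum_inertiaDeg_mul_log_le_tildeVonMangoldt [CharZero S] {p : ℕ} (hp : p.Prime) {k : ℕ}
    (hk : k ≠ 0)
    (hΛ₁ : ∀ (P : Ideal S) (m : ℕ), P.IsPrime → P ≠ ⊥ → 1 ≤ m → Λ (P ^ m) = Real.log (absNorm P))
    (hΛ : ∀ I, 0 ≤ Λ I) :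
    ∑ q : (span {(p : ℤ)}).primesOver S with q.1.inertiaDeg ℤ ∣ k,
      (q.1.inertiaDeg ℤ : ℝ) * Real.log p ≤ tildeVonMangoldt Λ (p ^ k) := by
  set Q : Finset ((span {(p : ℤ)}).primesOver S) := {q | q.1.inertiaDeg ℤ ∣ k}
  let power (q : (span {(p : ℤ)}).primesOver S) : Ideal S := q.1 ^ (k / q.1.inertiaDeg ℤ)
  have hexp : ∀ q ∈ Q, k / q.1.inertiaDeg ℤ ≠ 0 := fun q hq =>
    (Nat.div_pos (Nat.le_of_dvd (Nat.pos_of_ne_zero hk) (mem_filter.mp hq).2)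
      (inertiaDeg_pos _ _)).ne'
  have hpower : ∀ q ∈ Q, absNorm (power q) = p ^ k ∧
      Λ (power q) = q.1.inertiaDeg ℤ * Real.log p := by
    intro q hq
    have hq0 : q.1 ≠ ⊥ := ne_bot_of_liesOver_of_ne_bot (p := span {(p : ℤ)})
      (by simpa [span_singleton_eq_bot] using hp.ne_zero) q.1
    have hnorm : absNorm q.1 = p ^ q.1.inertiaDeg ℤ := (pow_inertiaDeg p q.1).symm
    constructor
    · rw [map_pow, hnorm, ← pow_mul, Nat.mul_div_cancel' (mem_filter.mp hq).2]
    · rw [hΛ₁ _ _ inferInstance hq0 (Nat.one_le_iff_ne_zero.mpr (hexp q hq)), hnorm, Nat.cast_pow,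
        Real.log_pow]
  have hinj : Set.InjOn power Q := fun q hq q' hq' h =>
    Subtype.ext (eq_of_pow_eq_pow (hexp q hq) (hexp q' hq') h)
  calc ∑ q ∈ Q, (q.1.inertiaDeg ℤ : ℝ) * Real.log p
      = ∑ I ∈ Q.image power, if absNorm I = p ^ k then Λ I else 0 := by
        rw [sum_image hinj]
        exact sum_congr rfl fun q hq => by rw [if_pos (hpower q hq).1, (hpower q hq).2]
    _ ≤ tildeVonMangoldt Λ (p ^ k) :=
        (summable_ite_absNorm_eq _).sum_le_tsum _ fun I _ => by split_ifs <;> simp [hΛ]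

variable (S) in
theorem finrank_le_sum_sum_inertiaDeg {p : ℕ} (hp : p.Prime) (A : ℕ) :
    Module.finrank ℤ S ≤ ∑ r ∈ Icc 1 (Module.finrank ℤ S),
      ∑ q : (span {(p : ℤ)}).primesOver S with q.1.inertiaDeg ℤ ∣ A + r, q.1.inertiaDeg ℤ := by
  set n := Module.finrank ℤ S
  have := isPrime_span_singleton_of_prime (Nat.prime_iff_prime_int.mp hp)
  have hsum := sum_ramification_inertia_eq_finrank (span {(p : ℤ)}) S
  have hcount : ∀ q : (span {(p : ℤ)}).primesOver S,
      q.1.ramificationIdx ℤ ≤ #{r ∈ Icc 1 n | q.1.inertiaDeg ℤ ∣ A + r} := fun q =>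
    calc q.1.ramificationIdx ℤ ≤ n / q.1.inertiaDeg ℤ :=
          (Nat.le_div_iff_mul_le (inertiaDeg_pos _ _)).mpr
            ((single_le_sum (f := fun q => q.1.ramificationIdx ℤ * q.1.inertiaDeg ℤ)
              (fun _ _ => Nat.zero_le _) (mem_univ q)).trans hsum.le)
      _ ≤ _ := Nat.div_le_card_Icc_filter_dvd_add A n _
  calc n = ∑ q, q.1.ramificationIdx ℤ * q.1.inertiaDeg ℤ := hsum.symm
    _ ≤ ∑ q, #{r ∈ Icc 1 n | q.1.inertiaDeg ℤ ∣ A + r} * q.1.inertiaDeg ℤ :=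
        sum_le_sum fun q _ => Nat.mul_le_mul_right _ (hcount q)
    _ = _ := by
        simp only [sum_filter, card_filter, sum_mul, ite_mul, one_mul, zero_mul]
        exact sum_comm

end

theorem sum_tilde_vonMangoldt_ge_general
    (L : Type) [Field L] [NumberField L]
    (Λ : Ideal (𝓞 L) → ℝ)
    (hΛ₁ : ∀ (P : Ideal (𝓞 L)) (m : ℕ), P.IsPrime → P ≠ ⊥ → 1 ≤ m →
      Λ (P ^ m) = Real.log (Ideal.absNorm P))
    (hΛ₂ : ∀ I : Ideal (𝓞 L),
      (¬ ∃ (P : Ideal (𝓞 L)) (m : ℕ), P.IsPrime ∧ P ≠ ⊥ ∧ 1 ≤ m ∧ I = P ^ m) → Λ I = 0)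
    (ℓ : ℕ) (p : ℕ) (hp : p.Prime) :
    (Module.finrank ℚ L : ℝ) * Real.log p ≤
      ∑ r ∈ Finset.Icc 1 (Module.finrank ℚ L),
        ∑' I : Ideal (𝓞 L),
          if Ideal.absNorm I = p ^ (ℓ * Module.finrank ℚ L + r) then Λ I else 0 := by
  set n := Module.finrank ℚ L
  have hcount := finrank_le_sum_sum_inertiaDeg (𝓞 L) hp (ℓ * n)
  rw [RingOfIntegers.rank] at hcount
  calc (n : ℝ) * Real.log p
      ≤ (∑ r ∈ Icc 1 n, ∑ q : (span {(p : ℤ)}).primesOver (𝓞 L) with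
          q.1.inertiaDeg ℤ ∣ ℓ * n + r, q.1.inertiaDeg ℤ : ℕ) * Real.log p :=
        mul_le_mul_of_nonneg_right (by exact_mod_cast hcount) (Real.log_natCast_nonneg p)
    _ = ∑ r ∈ Icc 1 n, ∑ q : (span {(p : ℤ)}).primesOver (𝓞 L) with
          q.1.inertiaDeg ℤ ∣ ℓ * n + r, (q.1.inertiaDeg ℤ : ℝ) * Real.log p := by
        simp only [Nat.cast_sum, sum_mul]
    _ ≤ ∑ r ∈ Icc 1 n, tildeVonMangoldt Λ (p ^ (ℓ * n + r)) :=
        sum_le_sum fun r hr => sum_inertiaDeg_mul_log_le_tildeVonMangoldt hp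
          (by grind) hΛ₁ (vonMangoldt_nonneg hΛ₁ hΛ₂)

/-- **Lemma 3.8.**  For every `ℓ ≥ 1` and prime `p`,
`Σ_{r=1}^{n_L} Λ̃_L(p^{ℓ·n_L + r}) ≥ n_L·log p`, where
`Λ̃_L(n) = Σ_{N(I) = n} Λ_L(I)`. -/
theorem sum_tilde_vonMangoldt_ge
    (L : Type) [Field L] [NumberField L]
    (Λ : Ideal (𝓞 L) → ℝ)
    (hΛ₁ : ∀ (P : Ideal (𝓞 L)) (m : ℕ), P.IsPrime → P ≠ ⊥ → 1 ≤ m →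
      Λ (P ^ m) = Real.log (Ideal.absNorm P))
    (hΛ₂ : ∀ I : Ideal (𝓞 L),
      (¬ ∃ (P : Ideal (𝓞 L)) (m : ℕ), P.IsPrime ∧ P ≠ ⊥ ∧ 1 ≤ m ∧ I = P ^ m) → Λ I = 0)
    (ℓ : ℕ) (hℓ : 1 ≤ ℓ) (p : ℕ) (hp : p.Prime) :
    (Module.finrank ℚ L : ℝ) * Real.log p ≤
      ∑ r ∈ Finset.Icc 1 (Module.finrank ℚ L),
        ∑' I : Ideal (𝓞 L),
          if Ideal.absNorm I = p ^ (ℓ * Module.finrank ℚ L + r) then Λ I else 0 :=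
  sum_tilde_vonMangoldt_ge_general L Λ hΛ₁ hΛ₂ ℓ p hp
end
end
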